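/- Let P and Q be Borel probability measures on ℝ and suppose the distribution function F_P is continuous. Then the map T^com := F_Q^← ∘ F_P pushes P forward to Q (i.e. P∘(T^com)⁻¹ = Q), and the pushforward of P under the map x ↦ (x, T^com(x)) equals the comonotone coupling 𝔓^com, the pushforward of Lebesgue measure on (0,1) under x ↦ (F_P^←(x), F_Q^←(x)). -/

import Mathlib

/-! On `(0,1)` the quantile function is the lower adjoint of the cdf:
`F^←(x) ≤ z ↔ x ≤ F(z)`. Hence `F_R^←` pushes the uniform law `U` on `(0,1)` forward
to `R` (inverse transform sampling). If `F_P` is continuous, then moreover `F_P (F_P^← x) = x`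
on `(0,1)`, so that `T^com ∘ F_P^← = F_Q^←` and `(id, T^com) ∘ F_P^← = (F_P^←, F_Q^←)`
hold `U`-a.e.; push `U` forward along both sides and use `U ∘ (F_P^←)⁻¹ = P`. -/

open Set MeasureTheory
open scoped ENNReal

/-- The quantile function `F_P^←(x) := inf{z ∈ ℝ : F_P(z) ≥ x}` of a Borel
probability measure `P` on `ℝ`, where `F_P(z) := P((−∞,z])`. -/
noncomputable def quantileFn (P : Measure ℝ) (x : ℝ) : ℝ :=
  sInf {z : ℝ | x ≤ (P (Set.Iic z)).toReal}

open ProbabilityTheory Filter Topology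

lemma MeasureTheory.Measure.map_eq_map_of_comp_ae_eq {α β γ : Type*} [MeasurableSpace α]
    [MeasurableSpace β] [MeasurableSpace γ] {μ : Measure α} {ν : Measure β}
    {f : α → β} {g : β → γ} {h : α → γ} (hν : μ.map f = ν) (hf : AEMeasurable f μ)
    (hg : AEMeasurable g ν) (hgf : g ∘ f =ᵐ[μ] h) : ν.map g = μ.map h := by
  subst hν
  rw [AEMeasurable.map_map_of_aemeasurable hg hf]
  exact Measure.map_congr hgf

lemma restrict_Ioo_zero_one_apply_Iic {c : ℝ} (hc : c ≤ 1) :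
    volume.restrict (Ioo (0 : ℝ) 1) (Iic c) = ENNReal.ofReal c := by
  rw [Measure.restrict_congr_set Ioo_ae_eq_Ioc, Measure.restrict_apply measurableSet_Iic,
    inter_comm, Ioc_inter_Iic, min_eq_right hc, Real.volume_Ioc, sub_zero]

section Quantile

variable (R : Measure ℝ)

lemma nonempty_le_cdf {x : ℝ} (hx : x < 1) : {z : ℝ | x ≤ cdf R z}.Nonempty :=
  ((tendsto_cdf_atTop R).eventually_const_lt hx).exists.imp fun _ hz => hz.le

lemma bddBelow_le_cdf {x : ℝ} (hx : 0 < x) : BddBelow {z : ℝ | x ≤ cdf R z} := by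
  obtain ⟨z₀, hz₀⟩ := ((tendsto_cdf_atBot R).eventually_lt_const hx).exists
  refine ⟨z₀, fun z hz => le_of_not_gt fun hlt => ?_⟩
  exact (hz.trans (monotone_cdf R hlt.le)).not_gt hz₀

variable [IsProbabilityMeasure R]

lemma quantileFn_eq_sInf_cdf (x : ℝ) : quantileFn R x = sInf {z : ℝ | x ≤ cdf R z} := by
  simp_rw [quantileFn, cdf_eq_real, measureReal_def]

lemma le_cdf_quantileFn {x : ℝ} (hx0 : 0 < x) (hx1 : x < 1) :
    x ≤ cdf R (quantileFn R x) := by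
  rw [quantileFn_eq_sInf_cdf]
  set S := {z : ℝ | x ≤ cdf R z}
  have hS : S ⊆ Ici (sInf S) := fun z hz => csInf_le (bddBelow_le_cdf R hx0) hz
  -- right-continuity at `sInf S`, which is approached from within `S ⊆ Ici (sInf S)`
  have hmem : cdf R (sInf S) ∈ closure (cdf R '' S) :=
    (((cdf R).right_continuous _).mono hS).mem_closure_image
      (csInf_mem_closure (nonempty_le_cdf R hx1) (bddBelow_le_cdf R hx0))
  exact isClosed_Ici.closure_subset_iff.2 (image_subset_iff.2 fun _ hz => hz) hmem

lemma quantileFn_le_iff {x z : ℝ} (hx0 : 0 < x) (hx1 : x < 1) :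
    quantileFn R x ≤ z ↔ x ≤ cdf R z :=
  ⟨fun h => (le_cdf_quantileFn R hx0 hx1).trans (monotone_cdf R h), fun h => by
    rw [quantileFn_eq_sInf_cdf]
    exact csInf_le (bddBelow_le_cdf R hx0) h⟩

lemma monotoneOn_quantileFn : MonotoneOn (quantileFn R) (Ioo 0 1) := fun _ hx _ hy hxy =>
  (quantileFn_le_iff R hx.1 hx.2).2 <|
    hxy.trans ((quantileFn_le_iff R hy.1 hy.2).1 le_rfl)

lemma aemeasurable_quantileFn : AEMeasurable (quantileFn R) (volume.restrict (Ioo 0 1)) :=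
  aemeasurable_restrict_of_monotoneOn measurableSet_Ioo (monotoneOn_quantileFn R)

lemma map_quantileFn : (volume.restrict (Ioo 0 1)).map (quantileFn R) = R := by
  refine Measure.ext_of_Iic _ R fun z => ?_
  have hpre : quantileFn R ⁻¹' Iic z =ᵐ[volume.restrict (Ioo 0 1)] Iic (cdf R z) := by
    filter_upwards [ae_restrict_mem measurableSet_Ioo] with x hx
    exact propext (quantileFn_le_iff R hx.1 hx.2)
  rw [Measure.map_apply_of_aemeasurable (aemeasurable_quantileFn R) measurableSet_Iic,
    measure_congr hpre, restrict_Ioo_zero_one_apply_Iic (cdf_le_one R z), ofReal_cdf]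

lemma cdf_quantileFn_of_continuous (hR : Continuous (cdf R)) {x : ℝ}
    (hx : x ∈ Ioo 0 1) : cdf R (quantileFn R x) = x := by
  refine le_antisymm ?_ (le_cdf_quantileFn R hx.1 hx.2)
  have hbelow : ∀ z ∈ Iio (quantileFn R x), cdf R z ≤ x := fun z hz =>
    (not_le.1 fun h => hz.not_ge ((quantileFn_le_iff R hx.1 hx.2).2 h)).le
  exact le_of_tendsto (hR.continuousAt.tendsto.mono_left nhdsWithin_le_nhds)
    (eventually_nhdsWithin_of_forall hbelow)

lemma map_cdf_of_continuous (hR : Continuous (cdf R)) :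
    R.map (cdf R) = volume.restrict (Ioo 0 1) := by
  refine (Measure.map_eq_map_of_comp_ae_eq (map_quantileFn R) (aemeasurable_quantileFn R)
    hR.measurable.aemeasurable ?_).trans Measure.map_id
  filter_upwards [ae_restrict_mem measurableSet_Ioo] with x hx
  exact cdf_quantileFn_of_continuous R hR hx

end Quantile

/-- if `F_P` is continuous then `T^com := F_Q^← ∘ F_P` pushes `P`
forward to `Q`, and the pushforward of `P` under `x ↦ (x, T^com(x))` equals the
comonotone coupling `𝔓^com`, i.e. the pushforward of Lebesgue measure on
`(0,1)` under `x ↦ (F_P^←(x), F_Q^←(x))`. -/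
theorem deterministic_comonotone_transport (P Q : Measure ℝ)
    [IsProbabilityMeasure P] [IsProbabilityMeasure Q]
    (hFP : Continuous (fun z : ℝ => (P (Set.Iic z)).toReal)) :
    P.map (fun x => quantileFn Q ((P (Set.Iic x)).toReal)) = Q
    ∧ P.map (fun x => (x, quantileFn Q ((P (Set.Iic x)).toReal)))
        = (volume.restrict (Set.Ioo (0:ℝ) 1)).map
            (fun x => (quantileFn P x, quantileFn Q x)) := by
  simp_rw [← measureReal_def, ← cdf_eq_real] at hFP ⊢
  have hT : AEMeasurable (quantileFn Q ∘ cdf P) P :=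
    ((map_cdf_of_continuous P hFP).symm ▸ aemeasurable_quantileFn Q).comp_aemeasurable
      hFP.measurable.aemeasurable
  have hcomp :
      quantileFn Q ∘ cdf P ∘ quantileFn P =ᵐ[volume.restrict (Ioo 0 1)] quantileFn Q := by
    filter_upwards [ae_restrict_mem measurableSet_Ioo] with x hx
    exact congrArg (quantileFn Q) (cdf_quantileFn_of_continuous P hFP hx)
  constructor
  · exact (Measure.map_eq_map_of_comp_ae_eq (map_quantileFn P) (aemeasurable_quantileFn P) hT
      hcomp).trans (map_quantileFn Q)
  · exact Measure.map_eq_map_of_comp_ae_eq (map_quantileFn P) (aemeasurable_quantileFn P)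
      (aemeasurable_id.prodMk hT) (hcomp.mono fun x hx => congrArg (Prod.mk (quantileFn P x)) hx)
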